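/- Let Z be a finite set of contexts with elements partitioned among rounds, let K ≥ 2, and let g_1, …, g_T : {1,…,K} → [0,1] and contexts z_1, …, z_T ∈ Z be arbitrary sequences. Suppose at each round t the distribution p_t is computed by a per-context Multiplicative Weights rule: p_t[a] ∝ exp(η_t · Σ_{τ=1}^{t−1} g_τ(a)·1{z_τ = z_t}) with learning rate η_t = 2·√(log K / n_t(z_t)), where n_t(z) = |{τ ≤ t : z_τ = z}| (in particular p_t is uniform the first time a context appears). Then for every policy π : Z → {1,…,K}: Σ_{t=1}^T g_t(π(z_t)) − Σ_{t=1}^T Σ_{a=1}^K p_t[a]·g_t(a) ≤ √(T · |Z| · log K). -/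

import Mathlib

/-!
Each context runs its own exponential-weights learner on the subsequence of rounds carrying
that context. For such a learner the potential `Φ_η(G) = η⁻¹ log (K⁻¹ ∑ₐ exp (η G a))` grows in
one round by at most the learner's expected reward plus `η / 8` (Hoeffding's lemma), does not
grow when `η` decreases (power-mean inequality), and dominates `G a - log K / η` for every action
`a`. Telescoping with `η_k = 2 √(log K / (k + 1))` and `∑_{k < m} (k + 1)^{-1/2} ≤ 2 √m` bounds
the regret on a context seen `T_z` times by `√(T_z log K)`; summing over contexts, Cauchy–Schwarz
and `∑_z T_z = T` give `√(T |Z| log K)`.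
-/

open Finset

section

open Real MeasureTheory ProbabilityTheory

theorem sum_mul_exp_mul_le_of_mem_Icc {ι : Type*} [Fintype ι] {w x : ι → ℝ}
    (hw : ∀ a, 0 ≤ w a) (hw_sum : ∑ a, w a = 1) (hx : ∀ a, x a ∈ Set.Icc (0 : ℝ) 1) (t : ℝ) :
    ∑ a, w a * exp (t * x a) ≤ exp (t * ∑ a, w a * x a + t ^ 2 / 8) := by
  let _ : MeasurableSpace ι := ⊤
  let μ : Measure ι := ∑ a, ENNReal.ofReal (w a) • Measure.dirac a
  have hint : ∀ f : ι → ℝ, ∫ a, f a ∂μ = ∑ a, w a * f a := by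
    intro f
    rw [integral_finsetSum_measure fun a _ =>
      Integrable.of_finite.smul_measure ENNReal.ofReal_ne_top]
    simp [integral_smul_measure, hw]
  have : IsProbabilityMeasure μ := ⟨by
    simp [μ, ← ENNReal.ofReal_sum_of_nonneg fun a _ => hw a, hw_sum]⟩
  have h := (hasSubgaussianMGF_of_mem_Icc (μ := μ) (X := x) (a := 0) (b := 1)
    (by fun_prop) (ae_of_all _ hx)).mgf_le t
  simp only [mgf, hint] at h
  have hσ : ((‖(1 : ℝ) - 0‖₊ / 2) ^ 2 : NNReal) * t ^ 2 / 2 = t ^ 2 / 8 := by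
    norm_num; ring
  simp_rw [hσ, mul_sub, exp_sub, ← mul_div_assoc, ← Finset.sum_div,
    div_le_iff₀ (exp_pos _)] at h
  rwa [exp_add, mul_comm]

section MultiplicativeWeights

variable {ι : Type*} [Fintype ι]

noncomputable def expWeights (η : ℝ) (G : ι → ℝ) (a : ι) : ℝ :=
  exp (η * G a) / ∑ b, exp (η * G b)

noncomputable def mwPotential (η : ℝ) (G : ι → ℝ) : ℝ :=
  log ((∑ b, exp (η * G b)) / Fintype.card ι) / η

variable [Nonempty ι]

theorem sum_exp_mul_pos (η : ℝ) (G : ι → ℝ) : 0 < ∑ b, exp (η * G b) :=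
  sum_pos (fun _ _ => exp_pos _) univ_nonempty

theorem expWeights_nonneg (η : ℝ) (G : ι → ℝ) (a : ι) : 0 ≤ expWeights η G a :=
  div_nonneg (exp_pos _).le (sum_exp_mul_pos η G).le

theorem sum_expWeights (η : ℝ) (G : ι → ℝ) : ∑ a, expWeights η G a = 1 := by
  simp only [expWeights]
  rw [← sum_div, div_self (sum_exp_mul_pos η G).ne']

theorem mwPotential_zero (η : ℝ) : mwPotential η (fun _ : ι => 0) = 0 := by
  simp [mwPotential]

theorem le_mwPotential_add (hη : 0 < η) (G : ι → ℝ) (a : ι) :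
    G a ≤ mwPotential η G + log (Fintype.card ι) / η := by
  have hW := sum_exp_mul_pos η G
  have hle : exp (η * G a) ≤ ∑ b, exp (η * G b) :=
    single_le_sum (f := fun b => exp (η * G b)) (fun b _ => (exp_pos _).le) (mem_univ a)
  rw [mwPotential, log_div hW.ne' (by positivity), sub_div, sub_add_cancel, le_div_iff₀ hη,
    mul_comm]
  exact (le_log_iff_exp_le hW).2 hle

theorem mwPotential_le_mwPotential {η η' : ℝ} (hη : 0 < η) (hηη' : η ≤ η') (G : ι → ℝ) :
    mwPotential η G ≤ mwPotential η' G := by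
  set K : ℝ := (Fintype.card ι : ℝ)
  have hK : 0 < K := by positivity
  have hη' : 0 < η' := hη.trans_le hηη'
  have hmean : ∀ θ, (∑ b, exp (θ * G b)) / K = ∑ b, K⁻¹ * exp (θ * G b) := fun θ => by
    rw [← mul_sum, inv_mul_eq_div]
  have hpow : ∀ b, exp (η * G b) ^ (η' / η) = exp (η' * G b) := fun b => by
    rw [← exp_mul]; congr 1; field_simp
  have hjensen := rpow_arith_mean_le_arith_mean_rpow univ (fun _ => K⁻¹)
    (fun b => exp (η * G b)) (fun _ _ => by positivity) (by simp [K]) (fun _ _ => (exp_pos _).le)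
    ((one_le_div hη).2 hηη')
  simp only [hpow, ← hmean] at hjensen
  have hM := div_pos (sum_exp_mul_pos η G) hK
  have hlog := log_le_log (rpow_pos_of_pos hM _) hjensen
  rw [log_rpow hM, div_mul_eq_mul_div, div_le_iff₀ hη] at hlog
  rw [mwPotential, mwPotential, div_le_div_iff₀ hη hη']
  linarith

theorem mwPotential_add_le {η : ℝ} (hη : 0 < η) (G g : ι → ℝ)
    (hg : ∀ a, g a ∈ Set.Icc (0 : ℝ) 1) :
    mwPotential η (fun a => G a + g a)
      ≤ mwPotential η G + ∑ a, expWeights η G a * g a + η / 8 := by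
  have hW := sum_exp_mul_pos η G
  have hsplit : ∑ b, exp (η * (G b + g b))
      = (∑ b, exp (η * G b)) * ∑ b, expWeights η G b * exp (η * g b) := by
    rw [mul_sum]
    refine sum_congr rfl fun b _ => ?_
    rw [expWeights, mul_add, exp_add]
    field_simp
  have hlog : log (∑ b, exp (η * (G b + g b)))
      ≤ log (∑ b, exp (η * G b)) + (η * ∑ a, expWeights η G a * g a + η ^ 2 / 8) := by
    have hmix : 0 < ∑ b, expWeights η G b * exp (η * g b) :=
      sum_pos (fun b _ => mul_pos (div_pos (exp_pos _) hW) (exp_pos _)) univ_nonempty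
    rw [hsplit, log_mul hW.ne' hmix.ne']
    gcongr
    exact (log_le_iff_le_exp hmix).2
      (sum_mul_exp_mul_le_of_mem_Icc (expWeights_nonneg η G) (sum_expWeights η G) hg η)
  have hK : (0 : ℝ) < Fintype.card ι := by positivity
  rw [mwPotential, mwPotential, log_div (sum_exp_mul_pos η _).ne' hK.ne', log_div hW.ne' hK.ne',
    div_le_iff₀ hη]
  field_simp
  linarith

theorem mwPotential_le_sum {η : ℕ → ℝ} (hη : ∀ k, 0 < η k) (hanti : Antitone η)
    {q : ℕ → ι → ℝ} {m : ℕ} (hq : ∀ k ≤ m, ∀ a, q k a ∈ Set.Icc (0 : ℝ) 1) :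
    mwPotential (η m) (fun a => ∑ k ∈ range (m + 1), q k a)
      ≤ ∑ k ∈ range (m + 1),
          (∑ a, expWeights (η k) (fun b => ∑ j ∈ range k, q j b) a * q k a + η k / 8) := by
  induction m with
  | zero =>
    simpa [mwPotential_zero] using mwPotential_add_le (hη 0) (fun _ => 0) (q 0) (hq 0 le_rfl)
  | succ m ih =>
    have hprev := ih fun k hk => hq k (hk.trans m.le_succ)
    have hmono := mwPotential_le_mwPotential (hη (m + 1)) (hanti m.le_succ)
      (fun a => ∑ j ∈ range (m + 1), q j a)
    have hstep := mwPotential_add_le (hη (m + 1)) (fun a => ∑ j ∈ range (m + 1), q j a)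
      (q (m + 1)) (hq (m + 1) le_rfl)
    simp only [← sum_range_succ] at hstep
    rw [sum_range_succ]
    linarith

theorem mw_regret_le {η : ℕ → ℝ} (hη : ∀ k, 0 < η k) (hanti : Antitone η) {q : ℕ → ι → ℝ}
    {m : ℕ} (hq : ∀ k ≤ m, ∀ a, q k a ∈ Set.Icc (0 : ℝ) 1) (a : ι) :
    ∑ k ∈ range (m + 1), q k a
        - ∑ k ∈ range (m + 1), ∑ b, expWeights (η k) (fun b => ∑ j ∈ range k, q j b) b * q k b
      ≤ log (Fintype.card ι) / η m + ∑ k ∈ range (m + 1), η k / 8 := by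
  have hlower := le_mwPotential_add (hη m) (fun a => ∑ k ∈ range (m + 1), q k a) a
  have hupper := mwPotential_le_sum hη hanti hq
  rw [sum_add_distrib] at hupper
  linarith

end MultiplicativeWeights

theorem sum_range_inv_sqrt_succ_le (m : ℕ) : ∑ k ∈ range m, (√(k + 1))⁻¹ ≤ 2 * √m := by
  induction m with
  | zero => simp
  | succ m ih =>
    have hm : √(m : ℝ) ≤ √(m + 1) := sqrt_le_sqrt (by linarith)
    have hpos : 0 < √((m : ℝ) + 1) := by positivity
    have hsq : √((m : ℝ) + 1) ^ 2 = √(m : ℝ) ^ 2 + 1 := by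
      rw [sq_sqrt (by positivity), sq_sqrt (by positivity)]
    -- `1 / √(m+1) ≤ 2 (√(m+1) - √m)` since `√(m+1) - √m = 1 / (√(m+1) + √m)`
    have hterm : (√((m : ℝ) + 1))⁻¹ ≤ 2 * √(m + 1) - 2 * √m := by
      rw [inv_le_iff_one_le_mul₀' hpos]
      nlinarith
    rw [sum_range_succ]
    push_cast
    linarith

theorem mw_regret_le_sqrt {ι : Type*} [Fintype ι] [Nontrivial ι] {q : ℕ → ι → ℝ} {m : ℕ}
    (hq : ∀ k < m, ∀ a, q k a ∈ Set.Icc (0 : ℝ) 1) (a : ι) :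
    ∑ k ∈ range m, q k a
        - ∑ k ∈ range m, ∑ b, expWeights (2 * √(log (Fintype.card ι) / (k + 1)))
            (fun b => ∑ j ∈ range k, q j b) b * q k b
      ≤ √(m * log (Fintype.card ι)) := by
  obtain _ | m := m
  · simp
  set L := log (Fintype.card ι)
  have hL : 0 < L := log_pos (by exact_mod_cast Fintype.one_lt_card)
  have hrate : ∀ k : ℕ, 2 * √(L / (k + 1)) = 2 * √L / √(k + 1) := fun k => by
    rw [sqrt_div hL.le, mul_div_assoc]
  have hanti : Antitone fun k : ℕ => 2 * √(L / (k + 1)) := fun i j hij => by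
    have : (i : ℝ) ≤ j := by exact_mod_cast hij
    dsimp only
    gcongr
  have hregret := mw_regret_le (fun k => by positivity) hanti (m := m)
    (fun k hk => hq k (Nat.lt_succ_of_le hk)) a
  have hrates : ∑ k ∈ range (m + 1), 2 * √(L / (k + 1)) / 8
      ≤ √L * √((m : ℝ) + 1) / 2 := by
    have hterm : ∀ k : ℕ, 2 * √(L / (k + 1)) / 8 = √L / 4 * (√(k + 1))⁻¹ := fun k => by
      rw [hrate]; ring
    rw [sum_congr rfl fun k _ => hterm k, ← mul_sum]
    calc √L / 4 * ∑ k ∈ range (m + 1), (√((k : ℝ) + 1))⁻¹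
        ≤ √L / 4 * (2 * √((m + 1 : ℕ) : ℝ)) := by gcongr; exact sum_range_inv_sqrt_succ_le _
      _ = √L * √((m : ℝ) + 1) / 2 := by push_cast; ring
  have hfirst : L / (2 * √(L / (m + 1))) = √L * √((m : ℝ) + 1) / 2 := by
    have : 0 < √L := sqrt_pos.2 hL
    rw [hrate]
    nth_rewrite 1 [← sq_sqrt hL.le]
    field_simp
  push_cast at hregret ⊢
  rw [sqrt_mul (by positivity), mul_comm]
  linarith

theorem sum_filter_range_eq_sum_nth {M : Type*} [AddCommMonoid M] (p : ℕ → Prop)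
    [DecidablePred p] (F : ℕ → ℕ → M) (t : ℕ) :
    ∑ τ ∈ (range t).filter p, F (Nat.count p τ) τ
      = ∑ j ∈ range (Nat.count p t), F j (Nat.nth p j) := by
  induction t with
  | zero => simp
  | succ t ih =>
    rw [range_add_one, filter_insert]
    by_cases ht : p t
    · rw [if_pos ht, sum_insert (by simp), Nat.count_succ_eq_succ_count_iff.2 ht,
        sum_range_succ, ih, Nat.nth_count ht, add_comm]
    · rw [if_neg ht, ih, Nat.count_succ_eq_count_iff.2 ht]

theorem sum_sqrt_le_sqrt_card_mul_sum {α : Type*} (s : Finset α) {f : α → ℝ}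
    (hf : ∀ i, 0 ≤ f i) :
    ∑ i ∈ s, √(f i) ≤ √(#s * ∑ i ∈ s, f i) := by
  simpa [sqrt_mul] using sum_sqrt_mul_sqrt_le s (fun _ => zero_le_one) hf

theorem regret_on_context_le_sqrt {Z ι : Type*} [DecidableEq Z] [Fintype ι] [Nontrivial ι] {T : ℕ}
    {g : ℕ → ι → ℝ} (hg : ∀ t < T, ∀ a, g t a ∈ Set.Icc (0 : ℝ) 1) (z : ℕ → Z)
    {p : ℕ → ι → ℝ}
    (hp : ∀ t < T, p t = expWeights
      (2 * √(log (Fintype.card ι) / (Nat.count (z · = z t) t + 1)))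
      (fun a => ∑ τ ∈ (range t).filter (z · = z t), g τ a))
    (ζ : Z) (a : ι) :
    ∑ t ∈ (range T).filter (z · = ζ), (g t a - ∑ b, p t b * g t b)
      ≤ √(#((range T).filter (z · = ζ)) * log (Fintype.card ι)) := by
  set q : ℕ → ι → ℝ := fun j => g (Nat.nth (z · = ζ) j)
  have hq : ∀ k < Nat.count (z · = ζ) T, ∀ a, q k a ∈ Set.Icc (0 : ℝ) 1 :=
    fun k hk => hg _ (Nat.nth_lt_of_lt_count hk)
  have hpast : ∀ t b, ∑ τ ∈ (range t).filter (z · = ζ), g τ b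
      = ∑ j ∈ range (Nat.count (z · = ζ) t), q j b :=
    fun t b => sum_filter_range_eq_sum_nth _ (fun _ τ => g τ b) t
  have hcontext : ∀ t ∈ (range T).filter (z · = ζ), g t a - ∑ b, p t b * g t b
      = g t a - ∑ b, expWeights (2 * √(log (Fintype.card ι) / (Nat.count (z · = ζ) t + 1)))
          (fun b => ∑ j ∈ range (Nat.count (z · = ζ) t), q j b) b * g t b := by
    intro t ht
    obtain ⟨htT, rfl⟩ := mem_filter.1 ht
    simp only [mem_range] at htT
    simp only [hp t htT, hpast]
  rw [sum_congr rfl hcontext, sum_filter_range_eq_sum_nth (z · = ζ)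
    (fun k t => g t a - ∑ b, expWeights (2 * √(log (Fintype.card ι) / (k + 1)))
      (fun b => ∑ j ∈ range k, q j b) b * g t b),
    sum_sub_distrib, ← Nat.count_eq_card_filter_range]
  exact mw_regret_le_sqrt hq a

end

/-- **Per-context Multiplicative Weights regret bound.**
Let `Z` be a finite set of contexts, `K ≥ 2` actions, rewards
`g 0, …, g (T-1) : Fin K → [0,1]` and contexts `z 0, …, z (T-1) ∈ Z`
(rounds indexed from `0`). At round `t`, the distribution `p t` is computed
by a per-context Multiplicative Weights rule over the past rounds sharing
the current context:
`p t a ∝ exp (η t * ∑_{τ < t, z τ = z t} g τ a)` with learning rate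
`η t = 2 * √(log K / n t)` where `n t = |{τ ≤ t : z τ = z t}|`.
Then for every policy `π : Z → Fin K`,
`∑_t g t (π (z t)) − ∑_t ∑_a p t a * g t a ≤ √(T * |Z| * log K)`. -/
theorem per_context_mw_regret_bound
    {Z : Type*} [Fintype Z] [DecidableEq Z]
    (K T : ℕ) (hK : 2 ≤ K)
    (g : ℕ → Fin K → ℝ)
    (hg : ∀ t < T, ∀ a : Fin K, g t a ∈ Set.Icc (0 : ℝ) 1)
    (z : ℕ → Z)
    (n : ℕ → ℕ)
    (hn : ∀ t < T, n t = ((Finset.range (t + 1)).filter (fun τ => z τ = z t)).card)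
    (η : ℕ → ℝ)
    (hη : ∀ t < T, η t = 2 * Real.sqrt (Real.log K / n t))
    (p : ℕ → Fin K → ℝ)
    (hp : ∀ t < T, ∀ a : Fin K,
      p t a = Real.exp (η t * ∑ τ ∈ (Finset.range t).filter (fun τ => z τ = z t), g τ a) /
        ∑ b : Fin K, Real.exp (η t * ∑ τ ∈ (Finset.range t).filter (fun τ => z τ = z t), g τ b))
    (π : Z → Fin K) :
    ∑ t ∈ Finset.range T, g t (π (z t))
      - ∑ t ∈ Finset.range T, ∑ a : Fin K, p t a * g t a
    ≤ Real.sqrt (T * (Fintype.card Z) * Real.log K) := by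
  have : Nontrivial (Fin K) := Fin.nontrivial_iff_two_le.2 hK
  have hmw : ∀ t < T, p t = expWeights
      (2 * √(Real.log (Fintype.card (Fin K)) / (Nat.count (z · = z t) t + 1)))
      (fun a => ∑ τ ∈ (range t).filter (z · = z t), g τ a) := by
    intro t ht
    funext a
    rw [hp t ht a, hη t ht, hn t ht, ← Nat.count_eq_card_filter_range,
      (Nat.count_succ_eq_succ_count_iff (p := (z · = z t))).2 rfl, Fintype.card_fin]
    push_cast
    rfl
  rw [← sum_sub_distrib, ← sum_fiberwise (range T) z]
  calc ∑ ζ, ∑ t ∈ (range T).filter (z · = ζ), (g t (π (z t)) - ∑ a, p t a * g t a)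
      = ∑ ζ, ∑ t ∈ (range T).filter (z · = ζ), (g t (π ζ) - ∑ a, p t a * g t a) :=
        sum_congr rfl fun ζ _ => sum_congr rfl fun t ht => by rw [(mem_filter.1 ht).2]
    _ ≤ ∑ ζ, √(#((range T).filter (z · = ζ)) * Real.log K) := sum_le_sum fun ζ _ => by
        simpa using regret_on_context_le_sqrt hg z hmw ζ (π ζ)
    _ ≤ √(Fintype.card Z * ∑ ζ, #((range T).filter (z · = ζ)) * Real.log K) :=
        sum_sqrt_le_sqrt_card_mul_sum _ fun ζ => by positivity
    _ = √(T * Fintype.card Z * Real.log K) := by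
        rw [← sum_mul, ← Nat.cast_sum, ← card_eq_sum_card_fiberwise fun t _ => mem_univ (z t),
          card_range]
        ring_nf
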